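/- arXiv:0809.0009 — 4 statements merged into one kernel-verified Lean document; each statement's English description precedes it below -/
import Mathlib

section
/- Let L be a symmetric positive semidefinite N×N matrix (a graph Laplacian) with second-smallest eigenvalue λ₂(L) > 0, let H₁,…,H_N be M_n×M real matrices, and define the NM×NM block-diagonal matrix D_H = diag(H₁ᵀH₁, …, H_NᵀH_N). If the matrix G = Σ_{n=1}^N HₙᵀHₙ is positive definite and b > 0, then the matrix b(L ⊗ I_M) + D_H is symmetric positive definite. -/
open Matrix Kronecker

/-!
Both summands are positive semidefinite, so a vector `x` (indexed by `Fin M × Fin N`) in the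
kernel of the quadratic form of the sum is in the kernel of each. For `b (I_M ⊗ L)` this splits
into the quadratic forms of `L` on the rows `x (i, ·)`, so by the hypothesis on `L` each row is
constant: `x (i, j) = c i`. On such `x` the quadratic form of `D_H` is `cᵀ G c`, which forces
`c = 0` since `G` is positive definite.
-/

namespace Matrix

section QuadraticForms

variable {m n R : Type*} [Fintype m] [Fintype n] [CommSemiring R]

theorem dotProduct_one_kronecker_mulVec [DecidableEq m] (L : Matrix n n R) (x y : m × n → R) :
    x ⬝ᵥ ((1 ⊗ₖ L) *ᵥ y) = ∑ i, (fun j => x (i, j)) ⬝ᵥ (L *ᵥ fun j => y (i, j)) := by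
  simp [dotProduct, mulVec, Fintype.sum_prod_type, kroneckerMap_apply, one_apply,
    Finset.mul_sum, mul_comm, mul_left_comm]

theorem dotProduct_blockDiagonal_mulVec [DecidableEq n] (d : n → Matrix m m R)
    (x y : m × n → R) :
    x ⬝ᵥ (blockDiagonal d *ᵥ y) = ∑ j, (fun i => x (i, j)) ⬝ᵥ (d j *ᵥ fun i => y (i, j)) := by
  simp [dotProduct, mulVec, Fintype.sum_prod_type, blockDiagonal_apply,
    Finset.mul_sum, ite_mul, Finset.sum_comm (γ := n)]

theorem dotProduct_blockDiagonal_mulVec_comp_fst [DecidableEq n] (d : n → Matrix m m R)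
    (c : m → R) :
    (fun p : m × n => c p.1) ⬝ᵥ (blockDiagonal d *ᵥ fun p => c p.1) = c ⬝ᵥ ((∑ j, d j) *ᵥ c) := by
  rw [dotProduct_blockDiagonal_mulVec, sum_mulVec, dotProduct_sum]

end QuadraticForms

section PosSemidef

variable {m n R : Type*} [Fintype m] [Fintype n]
variable [CommRing R] [PartialOrder R] [StarRing R]

theorem PosSemidef.blockDiagonal [DecidableEq n] [IsOrderedAddMonoid R] {d : n → Matrix m m R}
    (hd : ∀ j, (d j).PosSemidef) : (blockDiagonal d).PosSemidef := by
  refine .of_dotProduct_mulVec_nonneg ?_ fun x => ?_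
  · rw [IsHermitian, blockDiagonal_conjTranspose]
    exact congrArg _ (funext fun j => (hd j).isHermitian)
  · rw [dotProduct_blockDiagonal_mulVec]
    exact Finset.sum_nonneg fun j _ => (hd j).dotProduct_mulVec_nonneg _

theorem PosSemidef.posDef_add [IsOrderedAddMonoid R] {A B : Matrix n n R} (hA : A.PosSemidef)
    (hB : B.PosSemidef)
    (h : ∀ x, star x ⬝ᵥ (A *ᵥ x) = 0 → star x ⬝ᵥ (B *ᵥ x) = 0 → x = 0) : (A + B).PosDef := by
  refine .of_dotProduct_mulVec_pos (hA.isHermitian.add hB.isHermitian) fun x hx => ?_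
  have hAx := hA.dotProduct_mulVec_nonneg x
  have hBx := hB.dotProduct_mulVec_nonneg x
  rw [add_mulVec, dotProduct_add]
  refine (add_nonneg hAx hBx).lt_of_ne' fun hsum => hx ?_
  obtain ⟨hA0, hB0⟩ := (add_eq_zero_iff_of_nonneg hAx hBx).1 hsum
  exact h x hA0 hB0

theorem exists_eq_comp_fst_of_dotProduct_one_kronecker_mulVec_eq_zero [DecidableEq m]
    [TrivialStar R] [IsOrderedAddMonoid R] {L : Matrix n n R} (hL : L.PosSemidef)
    (hker : ∀ y : n → R, y ⬝ᵥ (L *ᵥ y) = 0 → ∃ c, y = fun _ => c) {x : m × n → R}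
    (hx : x ⬝ᵥ ((1 ⊗ₖ L) *ᵥ x) = 0) : ∃ c : m → R, x = fun p => c p.1 := by
  have hrow (i : m) : 0 ≤ (fun j => x (i, j)) ⬝ᵥ (L *ᵥ fun j => x (i, j)) := by
    simpa only [star_trivial] using hL.dotProduct_mulVec_nonneg fun j => x (i, j)
  rw [dotProduct_one_kronecker_mulVec, Finset.sum_eq_zero_iff_of_nonneg fun i _ => hrow i] at hx
  choose c hc using fun i => hker _ (hx i (Finset.mem_univ i))
  exact ⟨c, funext fun ⟨i, j⟩ => congrFun (hc i) j⟩

end PosSemidef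

end Matrix

theorem lu_laplacian_plus_gram_posdef_general {N M : ℕ} {Mn : Fin N → ℕ}
    (L : Matrix (Fin N) (Fin N) ℝ)
    (hLpsd : L.PosSemidef)
    (hlam2 : ∀ x : Fin N → ℝ, x ⬝ᵥ L.mulVec x = 0 → ∃ c : ℝ, x = fun _ => c)
    (H : ∀ n : Fin N, Matrix (Fin (Mn n)) (Fin M) ℝ)
    (hG : (∑ n : Fin N, (H n)ᵀ * H n).PosDef)
    (b : ℝ) (hb : 0 < b) :
    (b • ((1 : Matrix (Fin M) (Fin M) ℝ) ⊗ₖ L) +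
      Matrix.blockDiagonal (fun n => (H n)ᵀ * H n)).PosDef := by
  have hgram (n : Fin N) : ((H n)ᵀ * H n).PosSemidef := by
    simpa only [conjTranspose_eq_transpose_of_trivial] using posSemidef_conjTranspose_mul_self (H n)
  refine ((PosSemidef.one.kronecker hLpsd).smul hb.le).posDef_add
    (PosSemidef.blockDiagonal hgram) fun x hLx hHx => ?_
  rw [star_trivial, smul_mulVec, dotProduct_smul, smul_eq_mul, mul_eq_zero] at hLx
  obtain ⟨c, rfl⟩ := exists_eq_comp_fst_of_dotProduct_one_kronecker_mulVec_eq_zero hLpsd hlam2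
    (hLx.resolve_left hb.ne')
  rw [star_trivial, dotProduct_blockDiagonal_mulVec_comp_fst] at hHx
  obtain rfl : c = 0 := by
    by_contra hc
    exact (hG.dotProduct_mulVec_pos hc).ne' (by rwa [star_trivial])
  rfl

/-- If `L` is a symmetric PSD `N×N` Laplacian with `lam2(L) > 0` (its quadratic form vanishes
only on constant vectors), the block-diagonal matrix `D_H` has blocks `Hₙᵀ Hₙ`, the Grammian
`G = ∑ Hₙᵀ Hₙ` is positive definite and `b > 0`, then `b (L ⊗ I_M) + D_H` is positive
definite. -/
theorem lu_laplacian_plus_gram_posdef {N M : ℕ} {Mn : Fin N → ℕ}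
    (L : Matrix (Fin N) (Fin N) ℝ)
    (hLsym : L.IsSymm) (hLpsd : L.PosSemidef)
    (hlam2 : ∀ x : Fin N → ℝ, x ⬝ᵥ L.mulVec x = 0 → ∃ c : ℝ, x = fun _ => c)
    (H : ∀ n : Fin N, Matrix (Fin (Mn n)) (Fin M) ℝ)
    (hG : (∑ n : Fin N, (H n)ᵀ * H n).PosDef)
    (b : ℝ) (hb : 0 < b) :
    (b • ((1 : Matrix (Fin M) (Fin M) ℝ) ⊗ₖ L) +
      Matrix.blockDiagonal (fun n => (H n)ᵀ * H n)).PosDef :=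
  lu_laplacian_plus_gram_posdef_general L hLpsd hlam2 H hG b hb
end

section
/- Let 0 ≤ δ₁ < δ₂, δ₁ ≤ 1, a₁, a₂ > 0, and set r₁(i) = a₁/(i+1)^{δ₁}, r₂(i) = a₂/(i+1)^{δ₂}. Then for every fixed j (large enough that r₁(l) ≤ 1 for l ≥ j), the sums S(i) = Σ_{k=j}^{i−1} [ (Π_{l=k+1}^{i−1} (1 − r₁(l))) · r₂(k) ] converge to 0 as i → ∞. -/
/-!
The sum is the solution of `y (i + 1) = (1 - r₁ i) * y i + r₂ i` with `y j = 0`. Restarting the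
recursion at a later index `m` splits `y i` into the homogeneous part
`(∏ l ∈ Ico m i, (1 - r₁ l)) * y m`, which tends to `0` because `∑ r₁` diverges (`δ₁ ≤ 1`),
and the solution started from `0` at `m`. Once `|r₂ k| ≤ ε * r₁ k` for `k ≥ m` (`δ₁ < δ₂`), each
step of the latter is a convex combination of `|y i|` and `ε`, so it stays below `ε`.
-/

open Filter Finset Topology

def dampedSum (g h : ℕ → ℝ) (j i : ℕ) : ℝ :=
  ∑ k ∈ Ico j i, (∏ l ∈ Ico (k + 1) i, (1 - g l)) * h k

section dampedSum

variable {g h : ℕ → ℝ} {j m i : ℕ}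

@[simp]
lemma dampedSum_self : dampedSum g h j j = 0 := by
  simp [dampedSum]

lemma dampedSum_succ (hji : j ≤ i) :
    dampedSum g h j (i + 1) = (1 - g i) * dampedSum g h j i + h i := by
  rw [dampedSum, sum_Ico_succ_top hji, Ico_self, prod_empty, one_mul, dampedSum, mul_sum]
  congr 1
  refine sum_congr rfl fun k hk => ?_
  rw [prod_Ico_succ_top (mem_Ico.mp hk).2]
  ring

lemma dampedSum_eq_prod_mul_add (hjm : j ≤ m) (hmi : m ≤ i) :
    dampedSum g h j i = (∏ l ∈ Ico m i, (1 - g l)) * dampedSum g h j m + dampedSum g h m i := by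
  induction i, hmi using Nat.le_induction with
  | base => simp
  | succ i hmi ih =>
    rw [dampedSum_succ (hjm.trans hmi), dampedSum_succ hmi, ih, prod_Ico_succ_top hmi]
    ring

lemma abs_dampedSum_le {c : ℝ} (hc : 0 ≤ c) (hg1 : ∀ l, m ≤ l → g l ≤ 1)
    (hh : ∀ k, m ≤ k → |h k| ≤ c * g k) (hmi : m ≤ i) : |dampedSum g h m i| ≤ c := by
  induction i, hmi using Nat.le_induction with
  | base => simpa using hc
  | succ i hmi ih =>
    rw [dampedSum_succ hmi]
    calc |(1 - g i) * dampedSum g h m i + h i|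
        ≤ (1 - g i) * |dampedSum g h m i| + |h i| := by
          grw [abs_add_le, abs_mul, abs_of_nonneg (sub_nonneg.mpr (hg1 i hmi))]
      _ ≤ (1 - g i) * c + c * g i := by
          gcongr
          · exact sub_nonneg.mpr (hg1 i hmi)
          · exact hh i hmi
      _ = c := by ring

end dampedSum

lemma prod_one_sub_le_exp_neg_sum {ι : Type*} (s : Finset ι) {g : ι → ℝ}
    (hg : ∀ l ∈ s, g l ≤ 1) :
    ∏ l ∈ s, (1 - g l) ≤ Real.exp (-∑ l ∈ s, g l) := by
  rw [← sum_neg_distrib, Real.exp_sum]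
  exact prod_le_prod (fun l hl => sub_nonneg.mpr (hg l hl)) fun l _ => Real.one_sub_le_exp_neg _

lemma tendsto_prod_Ico_one_sub_zero {g : ℕ → ℝ} {m : ℕ} (hg : ∀ l, m ≤ l → g l ≤ 1)
    (hdiv : Tendsto (fun i => ∑ l ∈ range i, g l) atTop atTop) :
    Tendsto (fun i => ∏ l ∈ Ico m i, (1 - g l)) atTop (𝓝 0) := by
  have hsum : Tendsto (fun i => ∑ l ∈ Ico m i, g l) atTop atTop := by
    refine (tendsto_atTop_add_const_right _ (-∑ l ∈ range m, g l) hdiv).congr' ?_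
    filter_upwards [eventually_ge_atTop m] with i hmi
    rw [sum_Ico_eq_sub _ hmi, sub_eq_add_neg]
  refine squeeze_zero (fun _ => prod_nonneg fun l hl => sub_nonneg.mpr (hg l (mem_Ico.mp hl).1))
    (fun _ => prod_one_sub_le_exp_neg_sum _ fun l hl => hg l (mem_Ico.mp hl).1) ?_
  exact Real.tendsto_exp_atBot.comp (tendsto_neg_atTop_atBot.comp hsum)

lemma tendsto_dampedSum_zero {g h : ℕ → ℝ} {j : ℕ} (hg0 : ∀ l, j ≤ l → 0 ≤ g l)
    (hg1 : ∀ l, j ≤ l → g l ≤ 1) (hdiv : Tendsto (fun i => ∑ l ∈ range i, g l) atTop atTop)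
    (hh : h =o[atTop] g) : Tendsto (dampedSum g h j) atTop (𝓝 0) := by
  refine NormedAddGroup.tendsto_nhds_zero.2 fun ε hε => ?_
  obtain ⟨m₀, hm₀⟩ := eventually_atTop.1 (hh.def (half_pos hε))
  set m := max m₀ j
  have hjm : j ≤ m := le_max_right _ _
  have htail (i : ℕ) (hmi : m ≤ i) : |dampedSum g h m i| ≤ ε / 2 := by
    refine abs_dampedSum_le (half_pos hε).le (fun l hl => hg1 l (hjm.trans hl))
      (fun k hk => ?_) hmi
    simpa [abs_of_nonneg (hg0 k (hjm.trans hk))] using hm₀ k ((le_max_left _ _).trans hk)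
  have hhead :
      Tendsto (fun i => (∏ l ∈ Ico m i, (1 - g l)) * dampedSum g h j m) atTop (𝓝 0) := by
    simpa using (tendsto_prod_Ico_one_sub_zero (fun l hl => hg1 l (hjm.trans hl)) hdiv).mul_const
      (dampedSum g h j m)
  filter_upwards [NormedAddGroup.tendsto_nhds_zero.1 hhead (ε / 2) (half_pos hε),
    eventually_ge_atTop m] with i hsmall hmi
  rw [dampedSum_eq_prod_mul_add hjm hmi]
  calc ‖(∏ l ∈ Ico m i, (1 - g l)) * dampedSum g h j m + dampedSum g h m i‖
      ≤ ‖(∏ l ∈ Ico m i, (1 - g l)) * dampedSum g h j m‖ + |dampedSum g h m i| :=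
        norm_add_le _ _
    _ < ε / 2 + ε / 2 := add_lt_add_of_lt_of_le hsmall (htail i hmi)
    _ = ε := add_halves ε

lemma tendsto_sum_range_div_rpow_atTop {a δ : ℝ} (ha : 0 < a) (hδ : δ ≤ 1) :
    Tendsto (fun i => ∑ l ∈ range i, a / ((l : ℝ) + 1) ^ δ) atTop atTop := by
  refine (not_summable_iff_tendsto_nat_atTop_of_nonneg fun l => by positivity).1 fun hsum => ?_
  have : Summable fun n : ℕ => 1 / (n : ℝ) ^ δ := by
    refine (summable_nat_add_iff 1).1
      ((summable_mul_left_iff (inv_ne_zero ha.ne')).2 hsum |>.congr ?_)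
    intro n
    push_cast
    field_simp
  exact hδ.not_gt (Real.summable_one_div_nat_rpow.1 this)

lemma isLittleO_div_rpow_atTop {a b p q : ℝ} (ha : a ≠ 0) (hpq : p < q) :
    (fun x : ℝ => b / x ^ q) =o[atTop] fun x => a / x ^ p := by
  have hpos : ∀ᶠ x : ℝ in atTop, 0 < x := eventually_gt_atTop 0
  rw [Asymptotics.isLittleO_iff_tendsto' (hpos.mono fun x hx h0 => ?_)]
  · have hlim := (tendsto_rpow_neg_atTop (sub_pos.2 hpq)).const_mul (b / a)
    rw [mul_zero] at hlim
    refine hlim.congr' (hpos.mono fun x hx => ?_)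
    rw [neg_sub, Real.rpow_sub hx]
    field_simp
  · exact absurd h0 (div_ne_zero ha (Real.rpow_pos_of_pos hx p).ne')

theorem prop_alpha_second_claim_general (a₁ a₂ δ₁ δ₂ : ℝ) (ha₁ : 0 < a₁)
    (h12 : δ₁ < δ₂) (h1 : δ₁ ≤ 1) (j : ℕ)
    (hj : ∀ l : ℕ, j ≤ l → a₁ / ((l : ℝ) + 1) ^ δ₁ ≤ 1) :
    Tendsto
      (fun i => ∑ k ∈ Finset.Ico j i,
        (∏ l ∈ Finset.Ico (k + 1) i, (1 - a₁ / ((l : ℝ) + 1) ^ δ₁)) *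
          (a₂ / ((k : ℝ) + 1) ^ δ₂))
      atTop (nhds 0) := by
  have hshift : Tendsto (fun k : ℕ => (k : ℝ) + 1) atTop atTop :=
    tendsto_atTop_add_const_right _ 1 tendsto_natCast_atTop_atTop
  exact tendsto_dampedSum_zero (fun l _ => by positivity) hj
    (tendsto_sum_range_div_rpow_atTop ha₁ h1)
    ((isLittleO_div_rpow_atTop ha₁.ne' h12).comp_tendsto hshift)

/-- Lemma `prop_alpha`, second claim: with `r₁(i) = a₁/(i+1)^{δ₁}`, `r₂(i) = a₂/(i+1)^{δ₂}`
and `0 ≤ δ₁ < δ₂`, `δ₁ ≤ 1`, the convolution sums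
`S(i) = ∑_{k=j}^{i−1} (∏_{l=k+1}^{i−1} (1 − r₁(l))) r₂(k)` tend to `0`. -/
theorem prop_alpha_second_claim (a₁ a₂ δ₁ δ₂ : ℝ) (ha₁ : 0 < a₁) (ha₂ : 0 < a₂)
    (h0 : 0 ≤ δ₁) (h12 : δ₁ < δ₂) (h1 : δ₁ ≤ 1) (j : ℕ)
    (hj : ∀ l : ℕ, j ≤ l → a₁ / ((l : ℝ) + 1) ^ δ₁ ≤ 1) :
    Tendsto
      (fun i => ∑ k ∈ Finset.Ico j i,
        (∏ l ∈ Finset.Ico (k + 1) i, (1 - a₁ / ((l : ℝ) + 1) ^ δ₁)) *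
          (a₂ / ((k : ℝ) + 1) ^ δ₂))
      atTop (nhds 0) :=
  prop_alpha_second_claim_general a₁ a₂ δ₁ δ₂ ha₁ h12 h1 j hj
end

section
/- Let L̄ be a symmetric positive semidefinite N×N matrix with λ₂(L̄) > 0, let h₁,…,h_N : ℝ^M → ℝ^M be Lipschitz with constant K, let h = (1/N)Σₙ hₙ satisfy (θ−θ')ᵀ(h(θ)−h(θ')) ≥ γ‖θ−θ'‖² for some γ > 0, and fix θ* ∈ ℝ^M. Define R(x) = −[β(L̄⊗I_M)(x − 1_N⊗θ*) + (M(x) − M(1_N⊗θ*))] where M(x) = (h₁(x₁),…,h_N(x_N)) and V(x) = ‖x − 1_N⊗θ*‖². If β > (K² + Kγ)/(γ λ₂(L̄)), then ⟨R(x), ∇V(x)⟩ ≤ 0 for all x ∈ ℝ^{NM}, with equality only at x = 1_N⊗θ*. -/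
/-!
Write the rows of `x - 1 ⊗ θ*` as `y + zₙ`, with `y` their mean, so that `∑ₙ zₙ = 0`. The spectral
gap of `L̄` bounds the Laplacian term below by `λ₂ ∑ₙ ‖zₙ‖²`. In the `M`-term, strong monotonicity of
the average `h` contributes `N γ ‖y‖²`, and the Lipschitz bounds leave cross terms of size at most
`K ‖zₙ‖² + 2 K ‖zₙ‖ ‖y‖`. Hence `-½ ⟨R, ∇V⟩ ≥ ∑ₙ ((β λ₂ - K) ‖zₙ‖² - 2 K ‖zₙ‖ ‖y‖ + γ ‖y‖²)`. Each
summand is a binary quadratic form, positive definite exactly when `K² < (β λ₂ - K) γ`, which is the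
condition on `β`.
-/

open Matrix Kronecker

open scoped RealInnerProductSpace

section BinaryQuadratic

variable {a b c : ℝ}

lemma binary_quadratic_nonneg (ha : 0 < a) (hdisc : b ^ 2 < a * c) (s t : ℝ) :
    0 ≤ a * s ^ 2 - 2 * b * s * t + c * t ^ 2 := by
  have hdisc' : 0 < a * c - b ^ 2 := sub_pos.2 hdisc
  nlinarith [sq_nonneg (a * s - b * t), mul_nonneg hdisc'.le (sq_nonneg t)]

lemma eq_zero_of_binary_quadratic_eq_zero (ha : 0 < a) (hdisc : b ^ 2 < a * c) {s t : ℝ}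
    (h : a * s ^ 2 - 2 * b * s * t + c * t ^ 2 = 0) : s = 0 ∧ t = 0 := by
  have key : (a * s - b * t) ^ 2 + (a * c - b ^ 2) * t ^ 2 = 0 := by linear_combination a * h
  have hdisc' : 0 < a * c - b ^ 2 := sub_pos.2 hdisc
  have ht : t = 0 := by
    have : (a * c - b ^ 2) * t ^ 2 = 0 := by
      nlinarith [sq_nonneg (a * s - b * t), mul_nonneg hdisc'.le (sq_nonneg t)]
    simpa [hdisc'.ne'] using this
  subst ht
  exact ⟨by simpa [ha.ne'] using key, rfl⟩

end BinaryQuadratic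

section InnerProductSpace

variable {E : Type*} [NormedAddCommGroup E] [InnerProductSpace ℝ E]

lemma inner_sub_map_ge_of_lipschitz {f : E → E} {K : ℝ}
    (hf : ∀ u v, ‖f u - f v‖ ≤ K * ‖u - v‖) (θ y z : E) :
    ⟪f (θ + y) - f θ, y⟫ - (K * ‖z‖ ^ 2 + 2 * K * ‖z‖ * ‖y‖) ≤
      ⟪f (θ + y + z) - f θ, y + z⟫ := by
  set d₁ := f (θ + y + z) - f (θ + y)
  set d₂ := f (θ + y) - f θ
  have h₁ : ‖d₁‖ ≤ K * ‖z‖ := by simpa using hf (θ + y + z) (θ + y)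
  have h₂ : ‖d₂‖ ≤ K * ‖y‖ := by simpa using hf (θ + y) θ
  have hsplit : f (θ + y + z) - f θ = d₁ + d₂ := (sub_add_sub_cancel _ _ _).symm
  rw [hsplit, inner_add_left, inner_add_right, inner_add_right]
  have c₁ := neg_le_of_abs_le (abs_real_inner_le_norm d₁ y)
  have c₂ := neg_le_of_abs_le (abs_real_inner_le_norm d₁ z)
  have c₃ := neg_le_of_abs_le (abs_real_inner_le_norm d₂ z)
  have e₁ := mul_le_mul_of_nonneg_right h₁ (norm_nonneg y)
  have e₂ := mul_le_mul_of_nonneg_right h₁ (norm_nonneg z)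
  have e₃ := mul_le_mul_of_nonneg_right h₂ (norm_nonneg z)
  linarith

variable {ι : Type*} [Fintype ι]

lemma card_mul_le_sum_inner_of_mean {F : ι → E → E} {γ : ℝ}
    (hF : ∀ u v, γ * ‖u - v‖ ^ 2 ≤
      ⟪u - v, (Fintype.card ι : ℝ)⁻¹ • ∑ i, F i u - (Fintype.card ι : ℝ)⁻¹ • ∑ i, F i v⟫)
    (u v : E) :
    Fintype.card ι * (γ * ‖u - v‖ ^ 2) ≤ ∑ i, ⟪F i u - F i v, u - v⟫ := by
  rcases isEmpty_or_nonempty ι with hι | hι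
  · simp
  have h := hF u v
  rw [← smul_sub, ← Finset.sum_sub_distrib, inner_smul_right, inner_sum,
    le_inv_mul_iff₀ (by exact_mod_cast Fintype.card_pos)] at h
  simpa only [real_inner_comm] using h

lemma sum_binary_quadratic_le_of_lipschitz_of_mean {F : ι → E → E} {K γ : ℝ}
    (hLip : ∀ i u v, ‖F i u - F i v‖ ≤ K * ‖u - v‖)
    (hmono : ∀ u v, γ * ‖u - v‖ ^ 2 ≤
      ⟪u - v, (Fintype.card ι : ℝ)⁻¹ • ∑ i, F i u - (Fintype.card ι : ℝ)⁻¹ • ∑ i, F i v⟫)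
    (a : ℝ) (θ y : E) (z : ι → E) :
    ∑ i, ((a - K) * ‖z i‖ ^ 2 - 2 * K * ‖z i‖ * ‖y‖ + γ * ‖y‖ ^ 2) ≤
      a * ∑ i, ‖z i‖ ^ 2 + ∑ i, ⟪F i (θ + y + z i) - F i θ, y + z i⟫ := by
  have hcons : ∑ _i : ι, γ * ‖y‖ ^ 2 ≤ ∑ i, ⟪F i (θ + y) - F i θ, y⟫ := by
    simpa using card_mul_le_sum_inner_of_mean hmono (θ + y) θ
  have hcross := Finset.sum_le_sum fun i (_ : i ∈ (Finset.univ : Finset ι)) =>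
    inner_sub_map_ge_of_lipschitz (hLip i) θ y (z i)
  simp only [Finset.sum_sub_distrib, Finset.sum_add_distrib, ← Finset.mul_sum,
    ← Finset.sum_mul] at hcons hcross ⊢
  linarith

theorem consensus_form_nonneg_and_eq_zero {F : ι → E → E} {K γ a : ℝ}
    (hLip : ∀ i u v, ‖F i u - F i v‖ ≤ K * ‖u - v‖)
    (hmono : ∀ u v, γ * ‖u - v‖ ^ 2 ≤
      ⟪u - v, (Fintype.card ι : ℝ)⁻¹ • ∑ i, F i u - (Fintype.card ι : ℝ)⁻¹ • ∑ i, F i v⟫)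
    (hγ : 0 < γ) (hgap : K ^ 2 < (a - K) * γ) (X : ι → E) (θ y : E) :
    0 ≤ a * ∑ i, ‖X i - (θ + y)‖ ^ 2 + ∑ i, ⟪F i (X i) - F i θ, X i - θ⟫ ∧
      (a * ∑ i, ‖X i - (θ + y)‖ ^ 2 + ∑ i, ⟪F i (X i) - F i θ, X i - θ⟫ = 0 →
        ∀ i, X i = θ) := by
  have ha : 0 < a - K := pos_of_mul_pos_left ((sq_nonneg K).trans_lt hgap) hγ.le
  have hX : ∀ i, X i = θ + y + (X i - (θ + y)) := fun i => by abel
  have hX' : ∀ i, X i - θ = y + (X i - (θ + y)) := fun i => by abel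
  have hbound :=
    sum_binary_quadratic_le_of_lipschitz_of_mean hLip hmono a θ y fun i => X i - (θ + y)
  simp only [← hX, ← hX'] at hbound
  have hQ : ∀ i ∈ Finset.univ,
      0 ≤ (a - K) * ‖X i - (θ + y)‖ ^ 2 - 2 * K * ‖X i - (θ + y)‖ * ‖y‖ + γ * ‖y‖ ^ 2 :=
    fun i _ => binary_quadratic_nonneg ha hgap _ _
  refine ⟨(Finset.sum_nonneg hQ).trans hbound, fun hS i => ?_⟩
  have hzero := (Finset.sum_eq_zero_iff_of_nonneg hQ).1
    (le_antisymm (hS ▸ hbound) (Finset.sum_nonneg hQ)) i (Finset.mem_univ i)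
  obtain ⟨hz, hy⟩ := eq_zero_of_binary_quadratic_eq_zero ha hgap hzero
  rw [hX i, norm_eq_zero.1 hz, norm_eq_zero.1 hy, add_zero, add_zero]

end InnerProductSpace

lemma sum_sub_mean_eq_zero {ι : Type*} [Fintype ι] (f : ι → ℝ) :
    ∑ i, (f i - (Fintype.card ι : ℝ)⁻¹ * ∑ j, f j) = 0 := by
  rcases isEmpty_or_nonempty ι with hι | hι
  · simp
  rw [Finset.sum_sub_distrib, Finset.sum_const, Finset.card_univ, nsmul_eq_mul,
    mul_inv_cancel_left₀ (by positivity), sub_self]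

section Laplacian

variable {ι κ : Type*} [Fintype ι] [Fintype κ] [DecidableEq κ] {L : Matrix ι ι ℝ}

lemma dotProduct_kronecker_one_mulVec (v : ι × κ → ℝ) :
    v ⬝ᵥ (L ⊗ₖ (1 : Matrix κ κ ℝ)) *ᵥ v = ∑ k, (fun i => v (i, k)) ⬝ᵥ L *ᵥ fun i => v (i, k) := by
  simp only [dotProduct, mulVec, Fintype.sum_prod_type, kroneckerMap_apply, one_apply, mul_ite,
    ite_mul, mul_one, mul_zero, zero_mul, Finset.sum_ite_eq, Finset.mem_univ, if_true,
    Finset.mul_sum]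
  rw [Finset.sum_comm]

lemma dotProduct_mulVec_add_const (hsym : L.IsSymm) (hone : L *ᵥ 1 = 0) (w : ι → ℝ) (c : ℝ) :
    (w + c • 1) ⬝ᵥ L *ᵥ (w + c • 1) = w ⬝ᵥ L *ᵥ w := by
  have h1w : 1 ⬝ᵥ L *ᵥ w = 0 := by
    rw [dotProduct_mulVec, ← hsym.eq, vecMul_transpose, hone, zero_dotProduct]
  rw [mulVec_add, mulVec_smul, hone, smul_zero, add_zero, add_dotProduct, smul_dotProduct, h1w,
    smul_zero, add_zero]

lemma mul_sum_sq_sub_mean_le_dotProduct_kronecker_one_mulVec (hsym : L.IsSymm) (hone : L *ᵥ 1 = 0)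
    {lam : ℝ} (hspec : ∀ w : ι → ℝ, ∑ i, w i = 0 → lam * (w ⬝ᵥ w) ≤ w ⬝ᵥ L *ᵥ w)
    (v : ι × κ → ℝ) :
    lam * ∑ i, ∑ k, (v (i, k) - (Fintype.card ι : ℝ)⁻¹ * ∑ j, v (j, k)) ^ 2 ≤
      v ⬝ᵥ (L ⊗ₖ (1 : Matrix κ κ ℝ)) *ᵥ v := by
  rw [dotProduct_kronecker_one_mulVec, Finset.sum_comm, Finset.mul_sum]
  gcongr with k
  set c := (Fintype.card ι : ℝ)⁻¹ * ∑ j, v (j, k)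
  have hcol : (fun i => v (i, k)) = (fun i => v (i, k) - c) + c • 1 := by
    ext i; simp
  rw [hcol, dotProduct_mulVec_add_const hsym hone]
  simpa [dotProduct, sq] using hspec _ (sum_sub_mean_eq_zero fun i => v (i, k))

end Laplacian

namespace EuclideanSpace

open WithLp

variable {κ : Type*} [Fintype κ]

lemma real_inner_eq_dotProduct (u v : EuclideanSpace ℝ κ) : ⟪u, v⟫ = ofLp u ⬝ᵥ ofLp v := by
  rw [inner_eq_star_dotProduct, star_trivial, dotProduct_comm]

lemma real_norm_sq_eq_dotProduct (u : EuclideanSpace ℝ κ) : ‖u‖ ^ 2 = ofLp u ⬝ᵥ ofLp u := by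
  rw [← real_inner_self_eq_norm_sq, real_inner_eq_dotProduct]

lemma norm_le_of_dotProduct_le {K : ℝ} (hK : 0 ≤ K) {u v : EuclideanSpace ℝ κ}
    (h : ofLp u ⬝ᵥ ofLp u ≤ K ^ 2 * (ofLp v ⬝ᵥ ofLp v)) : ‖u‖ ≤ K * ‖v‖ := by
  rw [← real_norm_sq_eq_dotProduct, ← real_norm_sq_eq_dotProduct, ← mul_pow] at h
  exact (pow_le_pow_iff_left₀ (norm_nonneg u) (by positivity) two_ne_zero).1 h

end EuclideanSpace

theorem nu_drift_condition_general {N M : ℕ}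
    (L : Matrix (Fin N) (Fin N) ℝ) (hsym : L.IsSymm)
    (hone : L.mulVec (fun _ => 1) = 0)
    (lam2 : ℝ) (hlam2 : 0 < lam2)
    (hspec : ∀ y : Fin N → ℝ, (∑ n, y n) = 0 → lam2 * (y ⬝ᵥ y) ≤ y ⬝ᵥ L.mulVec y)
    (h : Fin N → (Fin M → ℝ) → (Fin M → ℝ))
    (K : ℝ) (hK : 0 ≤ K)
    (hLip : ∀ n θ θ', (h n θ - h n θ') ⬝ᵥ (h n θ - h n θ') ≤ K ^ 2 * ((θ - θ') ⬝ᵥ (θ - θ')))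
    (γ : ℝ) (hγ : 0 < γ)
    (hstr : ∀ θ θ' : Fin M → ℝ,
      γ * ((θ - θ') ⬝ᵥ (θ - θ')) ≤
        (θ - θ') ⬝ᵥ (((N : ℝ)⁻¹ • ∑ n, h n θ) - ((N : ℝ)⁻¹ • ∑ n, h n θ')))
    (θs : Fin M → ℝ) (β : ℝ) (hβ : (K ^ 2 + K * γ) / (γ * lam2) < β) :
    ∀ x : Fin N × Fin M → ℝ,
      let ones : Fin N × Fin M → ℝ := fun p => θs p.2
      let Mm : (Fin N × Fin M → ℝ) → (Fin N × Fin M → ℝ) :=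
        fun z p => h p.1 (fun i => z (p.1, i)) p.2
      let R : Fin N × Fin M → ℝ :=
        -(β • ((L ⊗ₖ (1 : Matrix (Fin M) (Fin M) ℝ)).mulVec (x - ones)) + (Mm x - Mm ones))
      R ⬝ᵥ ((2 : ℝ) • (x - ones)) ≤ 0 ∧
        (R ⬝ᵥ ((2 : ℝ) • (x - ones)) = 0 → x = ones) := by
  intro x ones Mm R
  let F : Fin N → EuclideanSpace ℝ (Fin M) → EuclideanSpace ℝ (Fin M) :=
    fun n u => WithLp.toLp 2 (h n (WithLp.ofLp u))
  let X : Fin N → EuclideanSpace ℝ (Fin M) := fun n => WithLp.toLp 2 fun m => x (n, m)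
  let Θ : EuclideanSpace ℝ (Fin M) := WithLp.toLp 2 θs
  let Y : EuclideanSpace ℝ (Fin M) := (N : ℝ)⁻¹ • ∑ n, (X n - Θ)
  set Q := (x - ones) ⬝ᵥ (L ⊗ₖ (1 : Matrix (Fin M) (Fin M) ℝ)) *ᵥ (x - ones)
  have hFLip : ∀ n u v, ‖F n u - F n v‖ ≤ K * ‖u - v‖ := fun n u v =>
    EuclideanSpace.norm_le_of_dotProduct_le hK (hLip n _ _)
  have hFmono : ∀ u v, γ * ‖u - v‖ ^ 2 ≤ ⟪u - v, (Fintype.card (Fin N) : ℝ)⁻¹ • ∑ n, F n u -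
      (Fintype.card (Fin N) : ℝ)⁻¹ • ∑ n, F n v⟫ := fun u v => by
    simpa [EuclideanSpace.real_inner_eq_dotProduct, EuclideanSpace.real_norm_sq_eq_dotProduct, F]
      using hstr (WithLp.ofLp u) (WithLp.ofLp v)
  have hlap : lam2 * ∑ n, ‖X n - (Θ + Y)‖ ^ 2 ≤ Q := by
    convert mul_sum_sq_sub_mean_le_dotProduct_kronecker_one_mulVec hsym hone hspec (x - ones)
      using 3 with n
    rw [EuclideanSpace.real_norm_sq_eq]
    simp [X, Θ, Y, ones, sub_sub]
  have hmon : (Mm x - Mm ones) ⬝ᵥ (x - ones) = ∑ n, ⟪F n (X n) - F n Θ, X n - Θ⟫ := by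
    simp [EuclideanSpace.real_inner_eq_dotProduct, dotProduct, Fintype.sum_prod_type, F, X, Θ, Mm,
      ones]
  have hdrift : R ⬝ᵥ (2 : ℝ) • (x - ones) = -2 * (β * Q + (Mm x - Mm ones) ⬝ᵥ (x - ones)) := by
    simp only [R, neg_dotProduct, add_dotProduct, smul_dotProduct, dotProduct_smul, smul_eq_mul,
      Q, dotProduct_comm (x - ones)]
    ring
  have hβ0 : 0 ≤ β := ((div_nonneg (by positivity) (by positivity)).trans_lt hβ).le
  have hgap : K ^ 2 < (β * lam2 - K) * γ := by
    rw [div_lt_iff₀ (by positivity)] at hβ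
    linarith
  obtain ⟨hnonneg, heq⟩ := consensus_form_nonneg_and_eq_zero hFLip hFmono hγ hgap X Θ Y
  have hβQ := mul_le_mul_of_nonneg_left hlap hβ0
  refine ⟨by nlinarith, fun h0 => ?_⟩
  have hX := heq (by nlinarith)
  funext p
  exact congrArg (fun v : EuclideanSpace ℝ (Fin M) => v p.2) (hX p.1)

/-- Drift condition for the `NU` algorithm under strict monotonicity of `h`:
with `R(x) = −[β(L̄⊗I_M)(x − 1⊗θ*) + (M(x) − M(1⊗θ*))]` and `V(x) = ‖x − 1⊗θ*‖²`,
if each `hₙ` is `K`-Lipschitz, `h = (1/N)∑ hₙ` is `γ`-strictly monotone and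
`β > (K² + Kγ)/(γ lam2(L̄))`, then `⟨R(x), ∇V(x)⟩ ≤ 0` with equality only at `x = 1⊗θ*`. -/
theorem nu_drift_condition {N M : ℕ}
    (L : Matrix (Fin N) (Fin N) ℝ) (hsym : L.IsSymm) (hpsd : L.PosSemidef)
    (hone : L.mulVec (fun _ => 1) = 0)
    (lam2 : ℝ) (hlam2 : 0 < lam2)
    (hspec : ∀ y : Fin N → ℝ, (∑ n, y n) = 0 → lam2 * (y ⬝ᵥ y) ≤ y ⬝ᵥ L.mulVec y)
    (h : Fin N → (Fin M → ℝ) → (Fin M → ℝ))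
    (K : ℝ) (hK : 0 ≤ K)
    (hLip : ∀ n θ θ', (h n θ - h n θ') ⬝ᵥ (h n θ - h n θ') ≤ K ^ 2 * ((θ - θ') ⬝ᵥ (θ - θ')))
    (γ : ℝ) (hγ : 0 < γ)
    (hstr : ∀ θ θ' : Fin M → ℝ,
      γ * ((θ - θ') ⬝ᵥ (θ - θ')) ≤
        (θ - θ') ⬝ᵥ (((N : ℝ)⁻¹ • ∑ n, h n θ) - ((N : ℝ)⁻¹ • ∑ n, h n θ')))
    (θs : Fin M → ℝ) (β : ℝ) (hβ : (K ^ 2 + K * γ) / (γ * lam2) < β) :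
    ∀ x : Fin N × Fin M → ℝ,
      let ones : Fin N × Fin M → ℝ := fun p => θs p.2
      let Mm : (Fin N × Fin M → ℝ) → (Fin N × Fin M → ℝ) :=
        fun z p => h p.1 (fun i => z (p.1, i)) p.2
      let R : Fin N × Fin M → ℝ :=
        -(β • ((L ⊗ₖ (1 : Matrix (Fin M) (Fin M) ℝ)).mulVec (x - ones)) + (Mm x - Mm ones))
      R ⬝ᵥ ((2 : ℝ) • (x - ones)) ≤ 0 ∧
        (R ⬝ᵥ ((2 : ℝ) • (x - ones)) = 0 → x = ones) :=
  nu_drift_condition_general L hsym hone lam2 hlam2 hspec h K hK hLip γ hγ hstr θs β hβ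
end

section
/- In the scalar i.i.d. setting where each of N sensors observes z_n(i) = hθ* + ζ_n(i) with h ≠ 0 and ζ_n(i) zero-mean variance σ², let S_LU(a,b) = (a²σ²h²/N) Σ_{n=1}^N 1/(2abλ_n(L̄) + 2ah² − 1), defined for a > 1/(2h²), b > 0, where 0 = λ₁(L̄) < λ₂(L̄) ≤ … ≤ λ_N(L̄). Then inf over a > 1/(2h²), b > 0 of S_LU(a,b) equals σ²/(Nh²), and this infimum is approached with a = 1/h² and b → ∞. -/
/-!
Every summand of `S_LU(a, b)` is positive, and the `λ₁ = 0` summand alone contributes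
`a²σ²h² / (N (2ah² - 1)) ≥ σ² / (N h²)`, with equality at `a = 1/h²`. For that `a` the
other summands are `O(1/b)`, so `S_LU(1/h², b) → σ² / (N h²)` as `b → ∞`.
-/

open Filter Topology

/-- The average asymptotic variance per sensor `S_LU(a, b)` of the distributed `LU` algorithm. -/
noncomputable def luVariance (N : ℕ) (h σ : ℝ) (lam : Fin N → ℝ) (a b : ℝ) : ℝ :=
  a ^ 2 * σ ^ 2 * h ^ 2 / N * ∑ n : Fin N, 1 / (2 * a * b * lam n + 2 * a * h ^ 2 - 1)

/-- `a²c² - (2ac - 1) = (ac - 1)²`. -/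
lemma one_div_le_sq_mul_div_two_mul_sub_one {a c : ℝ} (hc : 0 < c) (ha : 1 < 2 * a * c) :
    1 / c ≤ a ^ 2 * c / (2 * a * c - 1) := by
  rw [div_le_div_iff₀ hc (by linarith)]
  nlinarith [sq_nonneg (a * c - 1)]

lemma tendsto_sum_one_div_mul_add_atTop {ι : Type*} [Fintype ι]
    {lam : ι → ℝ} {i₀ : ι} (hlam₀ : lam i₀ = 0) (hlam : ∀ i, i ≠ i₀ → 0 < lam i)
    {k : ℝ} (hk : 0 < k) (c : ℝ) :
    Tendsto (fun b => ∑ i, 1 / (k * b * lam i + c)) atTop (𝓝 (1 / c)) := by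
  classical
  have hterm : ∀ i, Tendsto (fun b => 1 / (k * b * lam i + c)) atTop
      (𝓝 (if i = i₀ then 1 / c else 0)) := by
    intro i
    split_ifs with hi
    · simp [hi, hlam₀]
    · have hden : Tendsto (fun b => k * b * lam i + c) atTop atTop :=
        tendsto_atTop_add_const_right _ c
          ((tendsto_id.const_mul_atTop hk).atTop_mul_const (hlam i hi))
      simpa only [one_div, Pi.inv_def] using hden.inv_tendsto_atTop
  simpa using tendsto_finsetSum Finset.univ fun i _ => hterm i

section luVariance

variable {N : ℕ} {h σ : ℝ} {lam : Fin N → ℝ}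

lemma div_le_luVariance [NeZero N] (hh : h ≠ 0) (hlam0 : lam 0 = 0) (hlam : ∀ n, 0 ≤ lam n)
    {a b : ℝ} (ha : 1 / (2 * h ^ 2) < a) (hb : 0 ≤ b) :
    σ ^ 2 / (N * h ^ 2) ≤ luVariance N h σ lam a b := by
  have hc : 0 < h ^ 2 := by positivity
  have ha' : 1 < 2 * a * h ^ 2 := by
    rw [div_lt_iff₀ (by positivity)] at ha
    linarith
  have ha0 : 0 ≤ a := by nlinarith
  have hden : ∀ n, 0 ≤ 1 / (2 * a * b * lam n + 2 * a * h ^ 2 - 1) := fun n => by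
    have : 0 ≤ 2 * a * b * lam n := by have := hlam n; positivity
    exact one_div_nonneg.mpr (by linarith)
  calc σ ^ 2 / (N * h ^ 2) = σ ^ 2 / N * (1 / h ^ 2) := by ring
    _ ≤ σ ^ 2 / N * (a ^ 2 * h ^ 2 / (2 * a * h ^ 2 - 1)) := by
      have := one_div_le_sq_mul_div_two_mul_sub_one hc ha'
      gcongr
    _ = a ^ 2 * σ ^ 2 * h ^ 2 / N *
          (1 / (2 * a * b * lam 0 + 2 * a * h ^ 2 - 1)) := by
      rw [hlam0]
      ring
    _ ≤ luVariance N h σ lam a b :=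
      mul_le_mul_of_nonneg_left
        (Finset.single_le_sum (fun n _ => hden n) (Finset.mem_univ 0)) (by positivity)

lemma tendsto_luVariance_one_div_sq [NeZero N] (hh : h ≠ 0) (hlam0 : lam 0 = 0)
    (hlampos : ∀ n, n ≠ 0 → 0 < lam n) :
    Tendsto (luVariance N h σ lam (1 / h ^ 2)) atTop (𝓝 (σ ^ 2 / (N * h ^ 2))) := by
  have hsum := tendsto_sum_one_div_mul_add_atTop hlam0 hlampos
    (k := 2 * (1 / h ^ 2)) (by positivity) (2 * (1 / h ^ 2) * h ^ 2 - 1)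
  have hone : 2 * (1 / h ^ 2) * h ^ 2 - 1 = 1 := by field_simp; norm_num
  have hconst : (1 / h ^ 2) ^ 2 * σ ^ 2 * h ^ 2 / N = σ ^ 2 / (N * h ^ 2) := by field_simp
  simp only [hone, div_one] at hsum
  have hS : luVariance N h σ lam (1 / h ^ 2) =
      fun b => σ ^ 2 / (N * h ^ 2) * ∑ n, 1 / (2 * (1 / h ^ 2) * b * lam n + 1) := by
    funext b
    simp only [luVariance, add_sub_assoc, hone, hconst]
  simpa only [hS, mul_one] using hsum.const_mul (σ ^ 2 / (N * h ^ 2))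

end luVariance

theorem lu_optimal_asymptotic_variance_general (N : ℕ) [NeZero N] (h σ : ℝ) (hh : h ≠ 0)
    (lam : Fin N → ℝ) (hlam0 : lam 0 = 0) (hlampos : ∀ n : Fin N, n ≠ 0 → 0 < lam n) :
    IsGLB {s : ℝ | ∃ a b : ℝ, 1 / (2 * h ^ 2) < a ∧ 0 < b ∧
        s = a ^ 2 * σ ^ 2 * h ^ 2 / N *
              ∑ n : Fin N, 1 / (2 * a * b * lam n + 2 * a * h ^ 2 - 1)}
      (σ ^ 2 / (N * h ^ 2))
    ∧ Tendsto
        (fun b => (1 / h ^ 2) ^ 2 * σ ^ 2 * h ^ 2 / N *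
          ∑ n : Fin N, 1 / (2 * (1 / h ^ 2) * b * lam n + 2 * (1 / h ^ 2) * h ^ 2 - 1))
        atTop (nhds (σ ^ 2 / (N * h ^ 2))) := by
  have hlam : ∀ n, 0 ≤ lam n := fun n =>
    (eq_or_ne n 0).elim (fun hn => hn ▸ hlam0.ge) fun hn => (hlampos n hn).le
  have hlim := tendsto_luVariance_one_div_sq (σ := σ) hh hlam0 hlampos
  have hopt : 1 / (2 * h ^ 2) < 1 / h ^ 2 := by
    have : 0 < h ^ 2 := by positivity
    exact one_div_lt_one_div_of_lt this (by linarith)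
  refine ⟨isGLB_of_mem_closure ?_ (mem_closure_of_tendsto hlim ?_), hlim⟩
  · rintro s ⟨a, b, ha, hb, rfl⟩
    exact div_le_luVariance hh hlam0 hlam ha hb.le
  · filter_upwards [eventually_gt_atTop 0] with b hb
    exact ⟨1 / h ^ 2, b, hopt, hb, rfl⟩

/-- Optimal asymptotic variance of the distributed `LU` algorithm in the scalar i.i.d.
example: the infimum of `S_LU(a,b)` over `a > 1/(2h²)`, `b > 0` equals the centralized
variance `σ²/(Nh²)`, and it is approached with `a = 1/h²` as `b → ∞`. -/
theorem lu_optimal_asymptotic_variance (N : ℕ) [NeZero N] (h σ : ℝ) (hh : h ≠ 0)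
    (hσ : 0 ≤ σ)
    (lam : Fin N → ℝ) (hlam0 : lam 0 = 0) (hlampos : ∀ n : Fin N, n ≠ 0 → 0 < lam n) :
    IsGLB {s : ℝ | ∃ a b : ℝ, 1 / (2 * h ^ 2) < a ∧ 0 < b ∧
        s = a ^ 2 * σ ^ 2 * h ^ 2 / N *
              ∑ n : Fin N, 1 / (2 * a * b * lam n + 2 * a * h ^ 2 - 1)}
      (σ ^ 2 / (N * h ^ 2))
    ∧ Tendsto
        (fun b => (1 / h ^ 2) ^ 2 * σ ^ 2 * h ^ 2 / N *
          ∑ n : Fin N, 1 / (2 * (1 / h ^ 2) * b * lam n + 2 * (1 / h ^ 2) * h ^ 2 - 1))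
        atTop (nhds (σ ^ 2 / (N * h ^ 2))) :=
  lu_optimal_asymptotic_variance_general N h σ hh lam hlam0 hlampos
end
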